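/- arXiv:1303.0478 — 4 statements merged into one kernel-verified Lean document; each statement's English description precedes it below -/
import Mathlib

section
/- Let F be a field of characteristic 2 and let T be a finite nonempty set of vectors in (Z/2Z)^k whose sum is zero (i.e., the vectors are linearly dependent witnessed by T itself). Then in the group algebra F[(Z/2Z)^k], the product over v in T of (v + 1) equals zero. -/
theorem stmt_2 (F : Type*) [Field F] [CharP F 2] (k : ℕ)
    (T : Finset (Fin k → ZMod 2)) (hT : T.Nonempty) (hsum : ∑ v ∈ T, v = 0) :
    ∏ v ∈ T, ((AddMonoidAlgebra.single v 1 + 1 : AddMonoidAlgebra F (Fin k → ZMod 2))) = 0 := by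
  have hexp : ∏ v ∈ T, ((AddMonoidAlgebra.single v 1 + 1 : AddMonoidAlgebra F (Fin k → ZMod 2)))
      = ∑ S ∈ T.powerset, AddMonoidAlgebra.single (∑ v ∈ S, v) (1 : F) := by
    rw [Finset.prod_add]
    apply Finset.sum_congr rfl
    intro S _
    rw [Finset.prod_const_one, mul_one, AddMonoidAlgebra.prod_single, Finset.prod_const_one]
  rw [hexp]
  apply Finset.sum_involution (fun S _ => T \ S)
  · intro S hS
    simp only [Finset.mem_powerset] at hS
    have hsd : ∑ v ∈ T \ S, v = ∑ v ∈ S, v := by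
      have := Finset.sum_sdiff_eq_sub (f := fun v => v) hS
      rw [this, hsum, zero_sub]
      ext i
      simp [ZMod.neg_eq_self_mod_two]
    rw [hsd, ← AddMonoidAlgebra.single_add]
    have : (1 : F) + 1 = 0 := CharTwo.add_self_eq_zero 1
    rw [this, AddMonoidAlgebra.single_zero]
  · intro S hS _
    simp only [Finset.mem_powerset] at hS
    intro h
    have hd : Disjoint S S := by
      have := (Finset.sdiff_disjoint : Disjoint (T \ S) S)
      rwa [h] at this
    have hSe : S = ∅ := disjoint_self.mp hd
    rw [hSe, Finset.sdiff_empty] at h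
    exact hT.ne_empty h
  · intro S hS
    simp only [Finset.mem_powerset]
    exact Finset.sdiff_subset
  · intro S hS
    simp only [Finset.mem_powerset] at hS
    exact Finset.sdiff_sdiff_eq_self hS
end

section
/- Let F be a field of characteristic 2 and let V be a finite set of vectors in (Z/2Z)^k that is linearly independent over F_2. Then in the group algebra F[(Z/2Z)^k], the product over v in V of (v + 1) equals the sum of the basis elements corresponding to all 2^|V| distinct vectors in the F_2-span of V; in particular this product is nonzero. -/
/-! Expanding the product gives the sum of `single (∑ S) 1` over all subsets `S ⊆ V`. Over `ZMod 2`
every element of the span of `V` is such a subset sum, and linear independence makes `S ↦ ∑ S`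
injective, so the expansion is the sum over the span, which has `2 ^ #V` elements; its coefficient
at `0` is `1`. -/

section SubsetSums

variable {R M : Type*} [Semiring R] [AddCommMonoid M] [Module R M]

lemma Finset.sum_coe_sort_ite_mem_smul [DecidableEq M] {V S : Finset M} (hS : S ⊆ V) :
    ∑ v : V, (if (v : M) ∈ S then (1 : R) else 0) • (v : M) = ∑ v ∈ S, v := by
  simp only [ite_smul, one_smul, zero_smul]
  rw [Finset.univ_eq_attach, Finset.sum_attach V (fun v => if v ∈ S then v else 0),
    Finset.sum_ite_mem, Finset.inter_eq_right.mpr hS]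

lemma LinearIndependent.injOn_sum_powerset [Nontrivial R] {V : Finset M}
    (hV : LinearIndependent R ((↑) : V → M)) :
    Set.InjOn (fun S : Finset M => ∑ v ∈ S, v) V.powerset := by
  classical
  intro S hS T hT hST
  rw [Finset.mem_coe, Finset.mem_powerset] at hS hT
  have hcoeff := hV.fintypeLinearCombination_injective
    (a₁ := fun v => if (v : M) ∈ S then (1 : R) else 0)
    (a₂ := fun v => if (v : M) ∈ T then (1 : R) else 0)
    (by simpa only [Fintype.linearCombination_apply, Finset.sum_coe_sort_ite_mem_smul hS,
      Finset.sum_coe_sort_ite_mem_smul hT] using hST)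
  ext v
  constructor
  · intro hv
    simpa [hv] using congrFun hcoeff ⟨v, hS hv⟩
  · intro hv
    simpa [hv] using congrFun hcoeff ⟨v, hT hv⟩

end SubsetSums

lemma Submodule.coe_span_zmod_two_finset {M : Type*} [AddCommGroup M] [Module (ZMod 2) M]
    (V : Finset M) :
    (Submodule.span (ZMod 2) (V : Set M) : Set M) = (fun S => ∑ v ∈ S, v) '' V.powerset := by
  classical
  ext w
  simp only [SetLike.mem_coe, Set.mem_image, Finset.mem_powerset]
  constructor
  · intro hw
    obtain ⟨f, -, rfl⟩ := Submodule.mem_span_finset.mp hw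
    refine ⟨V.filter (fun v => f v = 1), Finset.filter_subset _ _, ?_⟩
    rw [Finset.sum_filter]
    refine Finset.sum_congr rfl fun v _ => ?_
    have hzmod : ∀ x : ZMod 2, x = 0 ∨ x = 1 := by decide
    rcases hzmod (f v) with h | h <;> simp [h]
  · rintro ⟨S, hS, rfl⟩
    exact Submodule.sum_mem _ fun v hv => Submodule.subset_span (hS hv)

namespace AddMonoidAlgebra

variable {R G : Type*} [CommSemiring R] [AddCommMonoid G]

lemma prod_single_add_one (s : Finset G) :
    ∏ g ∈ s, (single g 1 + 1 : AddMonoidAlgebra R G) =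
      ∑ t ∈ s.powerset, single (∑ g ∈ t, g) 1 := by
  classical
  rw [Finset.prod_add]
  refine Finset.sum_congr rfl fun t _ => ?_
  rw [Finset.prod_const_one, mul_one, prod_single, Finset.prod_const_one]

lemma sum_single_one_ne_zero [Nontrivial R] {W : Finset G} (hW : W.Nonempty) :
    ∑ w ∈ W, single w (1 : R) ≠ 0 := by
  classical
  obtain ⟨g, hg⟩ := hW
  intro h
  simpa [coeff_sum, coeff_single, Finsupp.single_apply, hg] using congrArg (coeff · g) h

end AddMonoidAlgebra

theorem stmt_4_general (F : Type*) [Field F] (k : ℕ)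
    (V : Finset (Fin k → ZMod 2))
    (hind : LinearIndependent (ZMod 2) (fun v : {x // x ∈ V} => (v : Fin k → ZMod 2))) :
    ∏ v ∈ V, ((AddMonoidAlgebra.single v 1 + 1 : AddMonoidAlgebra F (Fin k → ZMod 2)))
      = ∑ w ∈ (Set.toFinite ((Submodule.span (ZMod 2) (V : Set (Fin k → ZMod 2)) : Submodule (ZMod 2) (Fin k → ZMod 2)) : Set (Fin k → ZMod 2))).toFinset,
          AddMonoidAlgebra.single w (1 : F)
    ∧ (Set.toFinite ((Submodule.span (ZMod 2) (V : Set (Fin k → ZMod 2)) : Submodule (ZMod 2) (Fin k → ZMod 2)) : Set (Fin k → ZMod 2))).toFinset.card = 2 ^ V.card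
    ∧ ∏ v ∈ V, ((AddMonoidAlgebra.single v 1 + 1 : AddMonoidAlgebra F (Fin k → ZMod 2))) ≠ 0 := by
  classical
  have hinj := hind.injOn_sum_powerset
  have hspan : (Set.toFinite (Submodule.span (ZMod 2) (V : Set (Fin k → ZMod 2)) :
      Set (Fin k → ZMod 2))).toFinset = V.powerset.image (fun S => ∑ v ∈ S, v) := by
    rw [← Finset.coe_inj, Set.Finite.coe_toFinset, Finset.coe_image,
      Submodule.coe_span_zmod_two_finset]
  have hprod := AddMonoidAlgebra.prod_single_add_one (R := F) V
  rw [← Finset.sum_image (f := fun w => AddMonoidAlgebra.single w (1 : F)) hinj, ← hspan]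
    at hprod
  refine ⟨hprod, ?_, ?_⟩
  · rw [hspan, Finset.card_image_of_injOn hinj, Finset.card_powerset]
  · rw [hprod]
    exact AddMonoidAlgebra.sum_single_one_ne_zero ⟨0, by simp⟩

theorem stmt_4 (F : Type*) [Field F] [CharP F 2] (k : ℕ)
    (V : Finset (Fin k → ZMod 2))
    (hind : LinearIndependent (ZMod 2) (fun v : {x // x ∈ V} => (v : Fin k → ZMod 2))) :
    ∏ v ∈ V, ((AddMonoidAlgebra.single v 1 + 1 : AddMonoidAlgebra F (Fin k → ZMod 2)))
      = ∑ w ∈ (Set.toFinite ((Submodule.span (ZMod 2) (V : Set (Fin k → ZMod 2)) : Submodule (ZMod 2) (Fin k → ZMod 2)) : Set (Fin k → ZMod 2))).toFinset,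
          AddMonoidAlgebra.single w (1 : F)
    ∧ (Set.toFinite ((Submodule.span (ZMod 2) (V : Set (Fin k → ZMod 2)) : Submodule (ZMod 2) (Fin k → ZMod 2)) : Set (Fin k → ZMod 2))).toFinset.card = 2 ^ V.card
    ∧ ∏ v ∈ V, ((AddMonoidAlgebra.single v 1 + 1 : AddMonoidAlgebra F (Fin k → ZMod 2))) ≠ 0 :=
  stmt_4_general F k V hind
end

section
/- Let F be a field of characteristic 2 and let v_1, ..., v_m be elements of (Z/2Z)^k with m > k. Then the product ∏_{i=1}^{m} (v_i + 1) in the group algebra F[(Z/2Z)^k] is zero. -/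
theorem stmt_14 (F : Type*) [Field F] [CharP F 2] (k m : ℕ) (hm : k < m)
    (v : Fin m → (Fin k → ZMod 2)) :
    ∏ i : Fin m, ((AddMonoidAlgebra.single (v i) 1 + 1 : AddMonoidAlgebra F (Fin k → ZMod 2))) = 0 := by
  classical
  have zmod2 : ∀ a : ZMod 2, a ≠ 0 → a = 1 := by decide
  -- linear dependence
  have hnli : ¬ LinearIndependent (ZMod 2) v := by
    intro h
    have := h.fintype_card_le_finrank
    simp [Module.finrank_pi] at this
    omega
  obtain ⟨g, hg, i₀, hi₀⟩ := Fintype.not_linearIndependent_iff.mp hnli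
  set S : Finset (Fin m) := Finset.univ.filter (fun i => g i ≠ 0) with hS
  have hi₀S : i₀ ∈ S := by simp [hS, hi₀]
  have hsum : ∑ i ∈ S, v i = 0 := by
    rw [← hg, hS, Finset.sum_filter]
    refine Finset.sum_congr rfl fun i _ => ?_
    by_cases h : g i = 0
    · simp [h]
    · simp [h, zmod2 _ h]
  -- the key: product over S is zero
  have hkey : ∏ i ∈ S, ((AddMonoidAlgebra.single (v i) 1 + 1 : AddMonoidAlgebra F (Fin k → ZMod 2))) = 0 := by
    have expand : ∏ i ∈ S, ((AddMonoidAlgebra.single (v i) 1 + 1 : AddMonoidAlgebra F (Fin k → ZMod 2)))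
        = ∑ T ∈ S.powerset, AddMonoidAlgebra.single (∑ i ∈ T, v i) (1 : F) := by
      rw [Finset.prod_add]
      refine Finset.sum_congr rfl fun T hT => ?_
      rw [Finset.prod_const_one, mul_one, AddMonoidAlgebra.prod_single, Finset.prod_const_one]
    rw [expand]
    refine Finset.sum_involution (fun T _ => S \ T) ?_ ?_ ?_ ?_
    · intro T hT
      have hTS : T ⊆ S := Finset.mem_powerset.mp hT
      have : ∑ i ∈ S \ T, v i = ∑ i ∈ T, v i := by
        have hneg : ∀ a : ZMod 2, -a = a := by decide
        rw [Finset.sum_sdiff_eq_sub hTS, hsum, zero_sub]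
        funext j
        simp [hneg]
      rw [this, ← AddMonoidAlgebra.single_add, CharTwo.add_self_eq_zero]
      simp
    · intro T hT _
      intro hTeq
      replace hTeq : S \ T = T := hTeq
      have hd : Disjoint (S \ T) T := Finset.sdiff_disjoint
      rw [hTeq] at hd
      have h1 : T = ∅ := (Finset.disjoint_self_iff_empty T).mp hd
      rw [h1, Finset.sdiff_empty] at hTeq
      rw [hTeq] at hi₀S
      simp at hi₀S
    · intro T hT
      exact Finset.mem_powerset.mpr (Finset.sdiff_subset)
    · intro T hT
      exact Finset.sdiff_sdiff_eq_self (Finset.mem_powerset.mp hT)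
  calc ∏ i : Fin m, ((AddMonoidAlgebra.single (v i) 1 + 1 : AddMonoidAlgebra F (Fin k → ZMod 2)))
      = (∏ i ∈ Finset.univ \ S, (AddMonoidAlgebra.single (v i) 1 + 1 : AddMonoidAlgebra F (Fin k → ZMod 2))) *
        ∏ i ∈ S, (AddMonoidAlgebra.single (v i) 1 + 1 : AddMonoidAlgebra F (Fin k → ZMod 2)) :=
        (Finset.prod_sdiff (Finset.subset_univ S)).symm
    _ = 0 := by rw [hkey, mul_zero]
end

section
/- With F(G,k) defined as the sum over vertices i of the walk-generating polynomials F_{k,i}, the graph G contains a walk of k vertices in which every vertex is visited at most q-1 times if and only if F(G,k) has a q-monomial of degree k in its sum-product expansion (i.e., a monomial in which every variable has exponent between 1 and q-1). -/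
open MvPolynomial in
/-- `walkPoly G k i` is the polynomial `F_{k+1,i}`: `F_{1,i} = x_i` and
`F_{k+1,i} = x_i * ∑_{(i,j) ∈ E} F_{k,j}`. -/
noncomputable def walkPoly {n : ℕ} (G : SimpleGraph (Fin n)) [DecidableRel G.Adj] :
    ℕ → Fin n → MvPolynomial (Fin n) ℤ
  | 0, i => X i
  | (k+1), i => X i * ∑ j ∈ G.neighborFinset i, walkPoly G k j

/-- `F(G, k'+1) = ∑_i F_{k'+1,i}`. -/
noncomputable def graphPoly {n : ℕ} (G : SimpleGraph (Fin n)) [DecidableRel G.Adj]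
    (k' : ℕ) : MvPolynomial (Fin n) ℤ :=
  ∑ i : Fin n, walkPoly G k' i

open MvPolynomial in
lemma walkPoly_coeff_nonneg {n : ℕ} (G : SimpleGraph (Fin n)) [DecidableRel G.Adj] :
    ∀ (k : ℕ) (i : Fin n) (m : Fin n →₀ ℕ), 0 ≤ coeff m (walkPoly G k i)
  | 0, i, m => by
      rw [walkPoly, coeff_X']
      split <;> norm_num
  | (k+1), i, m => by
      rw [walkPoly, coeff_X_mul']
      split
      · rw [coeff_sum]
        exact Finset.sum_nonneg fun j _ => walkPoly_coeff_nonneg G k j _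
      · exact le_refl 0

open MvPolynomial in
lemma walkPoly_support {n : ℕ} (G : SimpleGraph (Fin n)) [DecidableRel G.Adj] :
    ∀ (k : ℕ) (i : Fin n) (m : Fin n →₀ ℕ),
      m ∈ (walkPoly G k i).support ↔
      ∃ w : Fin (k+1) → Fin n, w 0 = i ∧
        (∀ t : Fin k, G.Adj (w t.castSucc) (w t.succ)) ∧
        m = ∑ t : Fin (k+1), Finsupp.single (w t) 1
  | 0, i, m => by
      rw [walkPoly, support_X, Finset.mem_singleton]
      constructor
      · rintro rfl
        exact ⟨fun _ => i, rfl, fun t => t.elim0, by simp⟩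
      · rintro ⟨w, rfl, -, rfl⟩
        simp
  | (k+1), i, m => by
      rw [walkPoly, support_X_mul, Finset.mem_map]
      have hsum : ∀ m' : Fin n →₀ ℕ,
          m' ∈ (∑ j ∈ G.neighborFinset i, walkPoly G k j).support ↔
          ∃ j ∈ G.neighborFinset i, m' ∈ (walkPoly G k j).support := by
        intro m'
        rw [mem_support_iff, coeff_sum]
        rw [← not_iff_not]
        push_neg
        rw [Finset.sum_eq_zero_iff_of_nonneg
          (fun j _ => walkPoly_coeff_nonneg G k j m')]
        simp [mem_support_iff]
      constructor
      · rintro ⟨m', hm', rfl⟩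
        rw [hsum] at hm'
        obtain ⟨j, hj, hm'⟩ := hm'
        rw [walkPoly_support G k j m'] at hm'
        obtain ⟨w', hw0, hadj, rfl⟩ := hm'
        refine ⟨Fin.cons i w', Fin.cons_zero _ _, ?_, ?_⟩
        · intro t
          induction t using Fin.cases with
          | zero =>
              simpa [hw0] using (SimpleGraph.mem_neighborFinset G i j).mp hj
          | succ s =>
              have h1 : (s.succ : Fin (k+1)).castSucc = (s.castSucc).succ :=
                (Fin.succ_castSucc s).symm
              rw [h1, Fin.cons_succ, Fin.cons_succ]
              exact hadj s
        · conv_rhs => rw [Fin.sum_univ_succ]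
          simp [addLeftEmbedding]
      · rintro ⟨w, hw0, hadj, rfl⟩
        refine ⟨∑ t : Fin (k+1), Finsupp.single (w t.succ) 1, ?_, ?_⟩
        · rw [hsum]
          refine ⟨w 1, ?_, ?_⟩
          · rw [SimpleGraph.mem_neighborFinset, ← hw0]
            have := hadj 0
            simpa using this
          · rw [walkPoly_support G k (w 1) _]
            refine ⟨fun t => w t.succ, rfl, ?_, rfl⟩
            intro t
            have h1 : (t.castSucc).succ = (t.succ : Fin (k+1)).castSucc :=
              Fin.succ_castSucc t
            show G.Adj (w t.castSucc.succ) (w t.succ.succ)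
            rw [h1]
            exact hadj t.succ
        · conv_rhs => rw [Fin.sum_univ_succ]
          simp [addLeftEmbedding, hw0]

theorem stmt_18 (n : ℕ) (G : SimpleGraph (Fin n)) [DecidableRel G.Adj] (q k' : ℕ)
    (hq : 2 ≤ q) :
    (∃ w : Fin (k'+1) → Fin n,
        (∀ t : Fin k', G.Adj (w t.castSucc) (w t.succ)) ∧
        ∀ v : Fin n, (Finset.univ.filter (fun t : Fin (k'+1) => w t = v)).card ≤ q - 1)
    ↔ ∃ m ∈ (graphPoly G k').support,
        (∀ v : Fin n, m v ≤ q - 1) ∧ (m.sum fun _ e => e) = k' + 1 := by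
  classical
  have hgsupp : ∀ m : Fin n →₀ ℕ, m ∈ (graphPoly G k').support ↔
      ∃ w : Fin (k'+1) → Fin n,
        (∀ t : Fin k', G.Adj (w t.castSucc) (w t.succ)) ∧
        m = ∑ t : Fin (k'+1), Finsupp.single (w t) 1 := by
    intro m
    unfold graphPoly
    rw [MvPolynomial.mem_support_iff, MvPolynomial.coeff_sum, ← not_iff_not]
    push_neg
    rw [Finset.sum_eq_zero_iff_of_nonneg (fun i _ => walkPoly_coeff_nonneg G k' i m)]
    constructor
    · intro h w hadj hm
      have : m ∈ (walkPoly G k' (w 0)).support :=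
        (walkPoly_support G k' (w 0) m).mpr ⟨w, rfl, hadj, hm⟩
      exact MvPolynomial.mem_support_iff.mp this (h (w 0) (Finset.mem_univ _))
    · intro h i _
      by_contra hne
      obtain ⟨w, hw0, hadj, hm⟩ := (walkPoly_support G k' i m).mp
        (MvPolynomial.mem_support_iff.mpr hne)
      exact h w hadj hm
  have happly : ∀ (w : Fin (k'+1) → Fin n) (v : Fin n),
      (∑ t : Fin (k'+1), Finsupp.single (w t) 1) v =
      (Finset.univ.filter (fun t : Fin (k'+1) => w t = v)).card := by
    intro w v
    rw [Finset.sum_apply', Finset.card_filter]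
    refine Finset.sum_congr rfl fun t _ => ?_
    rw [Finsupp.single_apply]
  constructor
  · rintro ⟨w, hadj, hcount⟩
    refine ⟨∑ t : Fin (k'+1), Finsupp.single (w t) 1,
      (hgsupp _).mpr ⟨w, hadj, rfl⟩, ?_, ?_⟩
    · intro v
      rw [happly]
      exact hcount v
    · rw [Finsupp.sum_fintype _ _ (fun _ => rfl)]
      have := Finset.card_eq_sum_card_fiberwise
        (f := w) (s := (Finset.univ : Finset (Fin (k'+1))))
        (t := (Finset.univ : Finset (Fin n))) (fun x _ => Finset.mem_univ _)
      rw [Finset.card_univ, Fintype.card_fin] at this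
      have hcards : ∑ v : Fin n, (∑ t : Fin (k'+1), Finsupp.single (w t) 1) v =
          ∑ v : Fin n, (Finset.univ.filter (fun t : Fin (k'+1) => w t = v)).card :=
        Finset.sum_congr rfl fun v _ => happly w v
      rw [hcards]
      exact this.symm
  · rintro ⟨m, hm, hle, hsum⟩
    obtain ⟨w, hadj, rfl⟩ := (hgsupp m).mp hm
    exact ⟨w, hadj, fun v => by rw [← happly]; exact hle v⟩
end
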